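/- Let k be a finite field and let r ≥ 1. Let p ∈ k[x,y] be a monic homogeneous polynomial of degree r+1 that is not divisible by y (monic means p(x,1) is monic as a univariate polynomial). Let h ∈ k[x,y] be a monic homogeneous polynomial of degree r that is coprime to y·p. Then y divides x·h − p in k[x,y], the quotient g := (x·h − p)/y is homogeneous of degree r and coprime to h, and x·h − y·g = p. -/

import Mathlib

/-!
The `x^(r+1)`-coefficients of `x·h` and `p` are both `1`: both polynomials are monic and
not divisible by `y` (for `h` because `h` is coprime to `y`), and for a homogeneous
polynomial not divisible by `y` the coefficient of the top power of `x` is the leading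
coefficient of its dehomogenization. Hence the homogeneous polynomial `x·h − p` has no
pure `x`-power term, so `y` divides it. A common factor of `g` and `h` divides
`p = x·h − y·g`, and `h` is coprime to `p`.
-/

open MvPolynomial

/-- The dehomogenization of a bivariate polynomial: set `y = 1`. -/
noncomputable def dehom {k : Type*} [CommSemiring k] (p : MvPolynomial (Fin 2) k) :
    Polynomial k :=
  MvPolynomial.aeval (fun i : Fin 2 => if i = 0 then Polynomial.X else 1) p

/-- A homogeneous polynomial `p ∈ k[x,y]` is monic if `p(x,1)` is monic. -/
def MonicHom {k : Type*} [CommSemiring k] (p : MvPolynomial (Fin 2) k) : Prop :=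
  (dehom p).Monic

namespace MvPolynomial

lemma IsHomogeneous.of_X_mul {R σ : Type*} [CommSemiring R] {g : MvPolynomial σ R} {i : σ}
    {n : ℕ} (hg : (X i * g).IsHomogeneous (n + 1)) : g.IsHomogeneous n := by
  intro d hd
  have hdeg := hg (by rwa [coeff_X_mul])
  rw [map_add, Finsupp.weight_single, Pi.one_apply, one_smul] at hdeg
  omega

section FinTwo

variable {k : Type*} [CommSemiring k] {q : MvPolynomial (Fin 2) k} {n : ℕ}

lemma IsHomogeneous.apply_zero_add_apply_one (hq : q.IsHomogeneous n) {d : Fin 2 →₀ ℕ}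
    (hd : coeff d q ≠ 0) : d 0 + d 1 = n := by
  by_contra hne
  exact hd (hq.coeff_eq_zero (by rwa [Finsupp.degree_eq_sum, Fin.sum_univ_two]))

lemma dehom_eq_sum (q : MvPolynomial (Fin 2) k) :
    dehom q = ∑ d ∈ q.support, Polynomial.C (coeff d q) * Polynomial.X ^ d 0 := by
  simp [dehom, aeval_def, eval₂_eq', Polynomial.algebraMap_eq]

lemma IsHomogeneous.natDegree_dehom_le (hq : q.IsHomogeneous n) : (dehom q).natDegree ≤ n := by
  rw [dehom_eq_sum]
  refine Polynomial.natDegree_sum_le_of_forall_le _ _ fun d hd => ?_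
  refine (Polynomial.natDegree_C_mul_le _ _).trans ((Polynomial.natDegree_X_pow_le _).trans ?_)
  have := hq.apply_zero_add_apply_one (mem_support_iff.mp hd)
  omega

lemma IsHomogeneous.coeff_dehom (hq : q.IsHomogeneous n) :
    (dehom q).coeff n = coeff (Finsupp.single 0 n) q := by
  rw [dehom_eq_sum, Polynomial.finsetSum_coeff]
  simp only [Polynomial.coeff_C_mul, Polynomial.coeff_X_pow]
  rw [Finset.sum_eq_single (Finsupp.single 0 n)]
  · simp
  · intro d hd hne
    suffices d 0 ≠ n by simp [Ne.symm this]
    intro h0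
    have h1 : d 1 = 0 := by have := hq.apply_zero_add_apply_one (mem_support_iff.mp hd); omega
    exact hne (by ext i; fin_cases i <;> simp [h0, h1])
  · intro hns
    simpa using notMem_support_iff.mp hns

lemma IsHomogeneous.X_one_dvd_of_coeff_eq_zero (hq : q.IsHomogeneous n)
    (hc : coeff (Finsupp.single 0 n) q = 0) : X 1 ∣ q := by
  rw [X_dvd_iff_modMonomial_eq_zero]
  ext d
  rw [coeff_zero]
  by_cases hle : Finsupp.single 1 1 ≤ d
  · exact coeff_modMonomial_of_le q hle
  rw [coeff_modMonomial_of_not_le q hle]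
  have h1 : d 1 = 0 := by rw [Finsupp.single_le_iff] at hle; omega
  by_contra hne
  have h0 : d 0 = n := by have := hq.apply_zero_add_apply_one hne; omega
  exact hne (by rwa [show d = Finsupp.single 0 n by ext i; fin_cases i <;> simp [h0, h1]])

lemma IsHomogeneous.coeff_single_eq_one (hq : q.IsHomogeneous n) (hqm : MonicHom q)
    (hqy : ¬ X 1 ∣ q) : coeff (Finsupp.single 0 n) q = 1 := by
  have hne : (dehom q).coeff n ≠ 0 := by
    rw [hq.coeff_dehom]
    exact fun hc => hqy (hq.X_one_dvd_of_coeff_eq_zero hc)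
  have hdeg : (dehom q).natDegree = n :=
    le_antisymm hq.natDegree_dehom_le (Polynomial.le_natDegree_of_ne_zero hne)
  rw [← hq.coeff_dehom, ← hdeg]
  exact hqm.coeff_natDegree

end FinTwo

end MvPolynomial

lemma IsRelPrime.of_mul_sub_mul_eq {R : Type*} [CommRing R] {a b g h p : R}
    (hhp : IsRelPrime h p) (hp : a * h - b * g = p) : IsRelPrime g h :=
  fun _ hdg hdh => hhp hdh (hp ▸ dvd_sub (dvd_mul_of_dvd_right hdh a) (dvd_mul_of_dvd_right hdg b))

theorem stmt_5_general (k : Type*) [Field k] (r : ℕ)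
    (p : MvPolynomial (Fin 2) k) (hp : p.IsHomogeneous (r + 1)) (hpm : MonicHom p)
    (hpy : ¬ (X 1 ∣ p))
    (h : MvPolynomial (Fin 2) k)
    (hh : h.IsHomogeneous r) (hhm : MonicHom h)
    (hcop : IsRelPrime h (X 1 * p)) :
    ∃ g : MvPolynomial (Fin 2) k,
      X 0 * h - p = X 1 * g ∧ g.IsHomogeneous r ∧ IsRelPrime g h ∧
      X 0 * h - X 1 * g = p := by
  have hhy : ¬ X 1 ∣ h := fun hdvd => X_prime.not_isUnit (hcop hdvd (dvd_mul_right _ _))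
  have hxh : (X 0 * h).IsHomogeneous (r + 1) := by
    simpa only [add_comm] using (isHomogeneous_X k 0).mul hh
  have htop : coeff (Finsupp.single 0 (r + 1)) (X 0 * h - p) = 0 := by
    rw [coeff_sub, hp.coeff_single_eq_one hpm hpy,
      show Finsupp.single (0 : Fin 2) (r + 1) = Finsupp.single 0 1 + Finsupp.single 0 r by
        rw [← Finsupp.single_add, add_comm],
      coeff_X_mul, hh.coeff_single_eq_one hhm hhy, sub_self]
  obtain ⟨g, hg⟩ := (hxh.sub hp).X_one_dvd_of_coeff_eq_zero htop
  have hp_eq : X 0 * h - X 1 * g = p := by rw [← hg, sub_sub_cancel]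
  exact ⟨g, hg, (hg ▸ hxh.sub hp).of_X_mul,
    (hcop.of_mul_right_right).of_mul_sub_mul_eq hp_eq, hp_eq⟩

/-- converse direction of the first case of Proposition 2.6 of the
paper.  If `p` is monic homogeneous of degree `r+1`, not divisible by `y`, and `h`
is monic homogeneous of degree `r` coprime to `y·p`, then `y ∣ x·h − p`, the
quotient `g = (x·h − p)/y` is homogeneous of degree `r` and coprime to `h`, and
`x·h − y·g = p`. -/
theorem stmt_5 (k : Type*) [Field k] [Fintype k] (r : ℕ) (hr : 1 ≤ r)
    (p : MvPolynomial (Fin 2) k) (hp : p.IsHomogeneous (r + 1)) (hpm : MonicHom p)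
    (hpy : ¬ (X 1 ∣ p))
    (h : MvPolynomial (Fin 2) k)
    (hh : h.IsHomogeneous r) (hhm : MonicHom h)
    (hcop : IsRelPrime h (X 1 * p)) :
    ∃ g : MvPolynomial (Fin 2) k,
      X 0 * h - p = X 1 * g ∧ g.IsHomogeneous r ∧ IsRelPrime g h ∧
      X 0 * h - X 1 * g = p :=
  stmt_5_general k r p hp hpm hpy h hh hhm hcop
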